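/- arXiv:1502.06896 — 2 statements merged into one kernel-verified Lean document; each statement's English description precedes it below -/
import Mathlib

section
/- Let (G, B) be a biased graph and u a balancing vertex (i.e., G − u with the induced bias is balanced). For any two links e_i, e_j incident to u, either all cycles of G containing both e_i and e_j are balanced, or all such cycles are unbalanced. -/
open Set

/-! ### Matroid core -/

namespace Matroid

variable {α : Type*}

/-- A circuit: a minimal dependent set. -/
def Circuit' (M : Matroid α) (C : Set α) : Prop :=
  M.Dep C ∧ ∀ D, D ⊂ C → M.Indep D

/-- A matroid is connected if its ground set is nonempty and every two distinct
elements lie in a common circuit. -/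
def Connected' (M : Matroid α) : Prop :=
  M.E.Nonempty ∧ ∀ e ∈ M.E, ∀ f ∈ M.E, e ≠ f → ∃ C, M.Circuit' C ∧ e ∈ C ∧ f ∈ C

/-- Deletion of a set of elements. -/
def del (M : Matroid α) (D : Set α) : Matroid α := M ↾ (M.E \ D)

/-- Contraction of a set of elements. -/
def con (M : Matroid α) (C : Set α) : Matroid α := (M✶.del C)✶

/-- `N` is a minor of `M`. -/
def IsMinor' (N M : Matroid α) : Prop :=
  ∃ C D : Set α, Disjoint C D ∧ C ⊆ M.E ∧ D ⊆ M.E ∧ N = (M.con C).del D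

def IsStrictMinor' (N M : Matroid α) : Prop := N.IsMinor' M ∧ N ≠ M

/-- The rank (as an extended natural number) of a set in a matroid. -/
noncomputable def eRk' (M : Matroid α) (X : Set α) : ℕ∞ :=
  ⨆ I : {I : Set α // M.Indep I ∧ I ⊆ X}, I.1.encard

/-- A cocircuit is a circuit of the dual matroid. -/
def Cocircuit' (M : Matroid α) (K : Set α) : Prop := M✶.Circuit' K

/-- A loop is a one-element circuit. -/
def IsLoopElem (M : Matroid α) (e : α) : Prop := M.Circuit' {e}

end Matroid

/-! ### Biased graph core -/

universe u v

/-- A multigraph, given by assigning two (possibly equal) endpoints to each edge. -/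
structure MultiGraph (V : Type u) (E : Type v) where
  fst : E → V
  snd : E → V

namespace MultiGraph

variable {V : Type u} {E : Type v} (G : MultiGraph V E)

/-- Vertex `v` is incident with edge `e`. -/
def Inc (v : V) (e : E) : Prop := G.fst e = v ∨ G.snd e = v

/-- `e` is a loop. -/
def IsLoopEdge (e : E) : Prop := G.fst e = G.snd e

/-- `e` is a link (an edge with two distinct endpoints). -/
def IsLink (e : E) : Prop := G.fst e ≠ G.snd e

/-- The set of vertices incident with an edge in `X`. -/
def VSet (X : Set E) : Set V := {v | ∃ e ∈ X, G.Inc v e}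

/-- The degree of `v` in the edge set `X` (loops count twice). -/
noncomputable def deg (X : Set E) (v : V) : ℕ :=
  {e | e ∈ X ∧ G.fst e = v}.ncard + {e | e ∈ X ∧ G.snd e = v}.ncard

/-- Two edges of `X` are adjacent if they share a vertex. -/
def EdgeAdj (X : Set E) (e f : E) : Prop := e ∈ X ∧ f ∈ X ∧ ∃ v, G.Inc v e ∧ G.Inc v f

/-- The subgraph induced by the edge set `X` is connected. -/
def ConnectedOn (X : Set E) : Prop :=
  ∀ ⦃e f⦄, e ∈ X → f ∈ X → Relation.ReflTransGen (G.EdgeAdj X) e f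

/-- An edge set is a cycle if it is finite, nonempty, connected and every
incident vertex has degree exactly two. -/
def IsCycle (C : Set E) : Prop :=
  C.Finite ∧ C.Nonempty ∧ G.ConnectedOn C ∧ ∀ v ∈ G.VSet C, G.deg C v = 2

/-- The ends of an edge set: its vertices of degree one. -/
def Ends (P : Set E) : Set V := {v | v ∈ G.VSet P ∧ G.deg P v = 1}

/-- An edge set is a path if it is finite, nonempty, connected, has maximum degree
two and exactly two vertices of degree one. -/
def IsPath (P : Set E) : Prop :=
  P.Finite ∧ P.Nonempty ∧ G.ConnectedOn P ∧ (∀ v ∈ G.VSet P, G.deg P v ≤ 2) ∧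
    (G.Ends P).ncard = 2

/-- `C` is (the edge set of) a connected component of the subgraph induced by `X`. -/
def IsComponentOf (C X : Set E) : Prop :=
  ∃ e ∈ X, C = {f | f ∈ X ∧ Relation.ReflTransGen (G.EdgeAdj X) e f}

end MultiGraph

/-- A biased graph: a multigraph with a distinguished collection of "balanced" edge sets. -/
structure BiasedGraph (V : Type u) (E : Type v) extends MultiGraph V E where
  Balanced : Set (Set E)

namespace BiasedGraph

variable {V : Type u} {E : Type v} (Ω : BiasedGraph V E)

/-- The theta property: every balanced set is a cycle, and no theta subgraph
(a union of two cycles whose symmetric difference is a cycle) contains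
exactly two balanced cycles. -/
def ThetaProperty : Prop :=
  (∀ C ∈ Ω.Balanced, Ω.toMultiGraph.IsCycle C) ∧
  ∀ C₁ C₂ C₃ : Set E, Ω.toMultiGraph.IsCycle C₁ → Ω.toMultiGraph.IsCycle C₂ →
    Ω.toMultiGraph.IsCycle C₃ → C₃ = symmDiff C₁ C₂ →
    C₁ ∈ Ω.Balanced → C₂ ∈ Ω.Balanced → C₃ ∈ Ω.Balanced

def IsBalancedCycle (C : Set E) : Prop := Ω.toMultiGraph.IsCycle C ∧ C ∈ Ω.Balanced

def IsUnbalancedCycle (C : Set E) : Prop := Ω.toMultiGraph.IsCycle C ∧ C ∉ Ω.Balanced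

/-- The subgraph induced by `X` is balanced: every cycle inside it is balanced. -/
def BalancedOn (X : Set E) : Prop :=
  ∀ C ⊆ X, Ω.toMultiGraph.IsCycle C → C ∈ Ω.Balanced

/-- A contrabalanced theta subgraph: all three of its cycles are unbalanced. -/
def IsContraTheta (T : Set E) : Prop :=
  ∃ C₁ C₂ C₃ : Set E, Ω.IsUnbalancedCycle C₁ ∧ Ω.IsUnbalancedCycle C₂ ∧
    Ω.IsUnbalancedCycle C₃ ∧ C₃ = symmDiff C₁ C₂ ∧ T = C₁ ∪ C₂

/-- Tight handcuffs: two edge-disjoint unbalanced cycles meeting in exactly one vertex. -/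
def IsTightHandcuff (H : Set E) : Prop :=
  ∃ C₁ C₂ : Set E, Ω.IsUnbalancedCycle C₁ ∧ Ω.IsUnbalancedCycle C₂ ∧ Disjoint C₁ C₂ ∧
    (∃ v, Ω.toMultiGraph.VSet C₁ ∩ Ω.toMultiGraph.VSet C₂ = {v}) ∧ H = C₁ ∪ C₂

/-- Loose handcuffs: two vertex-disjoint unbalanced cycles joined by a path meeting
them only in its two ends. -/
def IsLooseHandcuff (H : Set E) : Prop :=
  ∃ C₁ C₂ P : Set E, Ω.IsUnbalancedCycle C₁ ∧ Ω.IsUnbalancedCycle C₂ ∧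
    Disjoint (Ω.toMultiGraph.VSet C₁) (Ω.toMultiGraph.VSet C₂) ∧
    Ω.toMultiGraph.IsPath P ∧ Disjoint P (C₁ ∪ C₂) ∧
    (∃ a b, a ≠ b ∧ Ω.toMultiGraph.Ends P = {a, b} ∧
      Ω.toMultiGraph.VSet P ∩ Ω.toMultiGraph.VSet C₁ = {a} ∧
      Ω.toMultiGraph.VSet P ∩ Ω.toMultiGraph.VSet C₂ = {b}) ∧
    H = C₁ ∪ C₂ ∪ P

/-- The circuits of the frame matroid of a biased graph. -/
def FrameCircuit (X : Set E) : Prop :=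
  Ω.IsBalancedCycle X ∨ Ω.IsContraTheta X ∨ Ω.IsTightHandcuff X ∨ Ω.IsLooseHandcuff X

end BiasedGraph

/-- A biased graph (on the ground set of `M`) represents the matroid `M`:
it satisfies the theta property and the circuits of `M` are exactly its frame circuits. -/
def BiasedGraph.Represents {V : Type u} {α : Type v} (M : Matroid α)
    (Ω : BiasedGraph V ↥M.E) : Prop :=
  Ω.ThetaProperty ∧ ∀ X : Set ↥M.E, M.Circuit' (Subtype.val '' X) ↔ Ω.FrameCircuit X

/-- A matroid is frame if some biased graph represents it. -/
def Matroid.IsFrame {α : Type v} (M : Matroid α) : Prop :=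
  ∃ (V : Type v) (Ω : BiasedGraph V ↥M.E), BiasedGraph.Represents M Ω

/-- A matroidal `(M, L)` is frame if some biased graph representing `M` has all
elements of `L` as unbalanced loops. -/
def Matroid.IsFrameMatroidal {α : Type v} (M : Matroid α) (L : Set α) : Prop :=
  ∃ (V : Type v) (Ω : BiasedGraph V ↥M.E), BiasedGraph.Represents M Ω ∧
    ∀ e : ↥M.E, e.1 ∈ L → Ω.toMultiGraph.IsLoopEdge e ∧ {e} ∉ Ω.Balanced

/-!
Given two cycles `C` and `D` through `e` and `f`, induct on `|C ∪ D|`. If `C ⊄ D`, take an ear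
`Q` of `D` in `C`: a path of `C \ D` meeting `D` exactly in its two ends. They split `D` into two
paths `R₁ ∋ e` and `R₂`; as `u ∉ Q` is interior to `R₁`, also `f ∈ R₁`. The cycle `Q ∪ R₂`
avoids `u`, hence is balanced, and `D = (Q ∪ R₁) ∆ (Q ∪ R₂)`; by the theta property `D` and
`Q ∪ R₁` are balanced together, while `Q ∪ R₁` is closer to `C`.
-/

namespace MultiGraph

section Degree

variable {V : Type u} {E : Type v} {G : MultiGraph V E} {X Y T : Set E} {g x y : E} {v w z : V}

def fstEdges (G : MultiGraph V E) (X : Set E) (v : V) : Set E := {e | e ∈ X ∧ G.fst e = v}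

def sndEdges (G : MultiGraph V E) (X : Set E) (v : V) : Set E := {e | e ∈ X ∧ G.snd e = v}

lemma deg_eq_ncard_add : G.deg X v = (G.fstEdges X v).ncard + (G.sndEdges X v).ncard := rfl

lemma fstEdges_mono (h : X ⊆ Y) : G.fstEdges X v ⊆ G.fstEdges Y v := fun _ he => ⟨h he.1, he.2⟩

lemma sndEdges_mono (h : X ⊆ Y) : G.sndEdges X v ⊆ G.sndEdges Y v := fun _ he => ⟨h he.1, he.2⟩

lemma _root_.Set.Finite.fstEdges (hX : X.Finite) : (G.fstEdges X v).Finite :=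
  hX.subset fun _ h => h.1

lemma _root_.Set.Finite.sndEdges (hX : X.Finite) : (G.sndEdges X v).Finite :=
  hX.subset fun _ h => h.1

lemma inc_iff_mem_fstEdges_or_mem_sndEdges (hg : g ∈ X) :
    G.Inc v g ↔ g ∈ G.fstEdges X v ∨ g ∈ G.sndEdges X v :=
  ⟨fun h => h.imp (⟨hg, ·⟩) (⟨hg, ·⟩), fun h => h.imp And.right And.right⟩

lemma eq_or_eq_of_inc (hv : G.Inc v g) (hw : G.Inc w g) (hvw : v ≠ w) (hz : G.Inc z g) :
    z = v ∨ z = w := by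
  unfold Inc at *
  grind

lemma IsLink.exists_inc_ne (hl : G.IsLink g) (hv : G.Inc v g) : ∃ w, G.Inc w g ∧ w ≠ v := by
  unfold IsLink Inc at *
  rcases hv with rfl | rfl
  · exact ⟨G.snd g, Or.inr rfl, Ne.symm hl⟩
  · exact ⟨G.fst g, Or.inl rfl, hl⟩

lemma VSet_mono (h : X ⊆ Y) : G.VSet X ⊆ G.VSet Y := fun _ ⟨e, he, hi⟩ => ⟨e, h he, hi⟩

lemma VSet_union : G.VSet (X ∪ Y) = G.VSet X ∪ G.VSet Y := by
  ext v
  simp only [VSet, mem_ofPred_eq, mem_union, or_and_right, exists_or]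

lemma VSet_singleton : G.VSet {g} = {v | G.Inc v g} := by
  ext v
  simp [VSet]

lemma deg_eq_zero_of_notMem_VSet (h : v ∉ G.VSet X) : G.deg X v = 0 := by
  have hfst : G.fstEdges X v = ∅ :=
    eq_empty_of_forall_notMem fun e he => h ⟨e, he.1, Or.inl he.2⟩
  have hsnd : G.sndEdges X v = ∅ :=
    eq_empty_of_forall_notMem fun e he => h ⟨e, he.1, Or.inr he.2⟩
  simp [deg_eq_ncard_add, hfst, hsnd]

lemma mem_VSet_of_deg_ne_zero (h : G.deg X v ≠ 0) : v ∈ G.VSet X :=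
  not_imp_comm.1 deg_eq_zero_of_notMem_VSet h

lemma ncard_le_deg (hX : X.Finite) (hT : T ⊆ X) (hinc : ∀ t ∈ T, G.Inc v t) :
    T.ncard ≤ G.deg X v := by
  have hsub : T ⊆ G.fstEdges X v ∪ G.sndEdges X v := fun t ht =>
    (inc_iff_mem_fstEdges_or_mem_sndEdges (hT ht)).1 (hinc t ht)
  calc T.ncard ≤ (G.fstEdges X v ∪ G.sndEdges X v).ncard :=
        ncard_le_ncard hsub (hX.fstEdges.union hX.sndEdges)
    _ ≤ G.deg X v := ncard_union_le _ _

lemma one_le_deg (hX : X.Finite) (h : v ∈ G.VSet X) : 1 ≤ G.deg X v := by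
  obtain ⟨g, hg, hi⟩ := h
  simpa using ncard_le_deg hX (singleton_subset_iff.2 hg) (by simpa using hi)

lemma two_le_deg (hX : X.Finite) (hx : x ∈ X) (hy : y ∈ X) (hxy : x ≠ y) (hvx : G.Inc v x)
    (hvy : G.Inc v y) : 2 ≤ G.deg X v := by
  rw [← ncard_pair hxy]
  exact ncard_le_deg hX (pair_subset hx hy) (by simp [hvx, hvy])

lemma exists_unique_inc_of_deg_eq_one (hX : X.Finite) (h : G.deg X v = 1) :
    ∃ g ∈ X, G.Inc v g ∧ ∀ x ∈ X, G.Inc v x → x = g := by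
  obtain ⟨g, hg, hi⟩ := mem_VSet_of_deg_ne_zero (G := G) (by omega : G.deg X v ≠ 0)
  refine ⟨g, hg, hi, fun x hx hvx => by_contra fun hxg => ?_⟩
  have := two_le_deg hX hx hg hxg hvx hi
  omega

lemma deg_mono (hXY : X ⊆ Y) (hY : Y.Finite) : G.deg X v ≤ G.deg Y v :=
  add_le_add (ncard_le_ncard (fstEdges_mono hXY) hY.fstEdges)
    (ncard_le_ncard (sndEdges_mono hXY) hY.sndEdges)

lemma deg_union (hd : Disjoint X Y) (hX : X.Finite) (hY : Y.Finite) :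
    G.deg (X ∪ Y) v = G.deg X v + G.deg Y v := by
  have hfst : G.fstEdges (X ∪ Y) v = G.fstEdges X v ∪ G.fstEdges Y v := by
    ext; simp only [fstEdges, mem_ofPred_eq, mem_union]; tauto
  have hsnd : G.sndEdges (X ∪ Y) v = G.sndEdges X v ∪ G.sndEdges Y v := by
    ext; simp only [sndEdges, mem_ofPred_eq, mem_union]; tauto
  rw [deg_eq_ncard_add, deg_eq_ncard_add, deg_eq_ncard_add, hfst, hsnd,
    ncard_union_eq (hd.mono (fun _ h => h.1) (fun _ h => h.1)) hX.fstEdges hY.fstEdges,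
    ncard_union_eq (hd.mono (fun _ h => h.1) (fun _ h => h.1)) hX.sndEdges hY.sndEdges]
  ring

lemma mem_of_subset_of_deg_le (hXY : X ⊆ Y) (hY : Y.Finite) (hdeg : G.deg Y v ≤ G.deg X v)
    (hg : g ∈ Y) (hi : G.Inc v g) : g ∈ X := by
  have hYfst : (G.fstEdges Y v).Finite := hY.fstEdges
  have hYsnd : (G.sndEdges Y v).Finite := hY.sndEdges
  have hfst := ncard_le_ncard (fstEdges_mono (v := v) hXY) hYfst
  have hsnd := ncard_le_ncard (sndEdges_mono (v := v) hXY) hYsnd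
  rw [deg_eq_ncard_add, deg_eq_ncard_add] at hdeg
  rcases (inc_iff_mem_fstEdges_or_mem_sndEdges hg).1 hi with h | h
  · rw [← eq_of_subset_of_ncard_le (fstEdges_mono hXY) (by omega) hYfst] at h
    exact h.1
  · rw [← eq_of_subset_of_ncard_le (sndEdges_mono hXY) (by omega) hYsnd] at h
    exact h.1

lemma deg_singleton_of_inc (hl : G.IsLink g) (hi : G.Inc v g) : G.deg {g} v = 1 := by
  rcases hi with h | h
  · have hfst : G.fstEdges {g} v = {g} :=
      ext fun x => ⟨And.left, fun hx => ⟨hx, (mem_singleton_iff.1 hx).symm ▸ h⟩⟩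
    have hsnd : G.sndEdges {g} v = ∅ :=
      eq_empty_of_forall_notMem fun x ⟨hx, hxv⟩ => hl (by rw [h, ← hxv, hx])
    simp [deg_eq_ncard_add, hfst, hsnd]
  · have hfst : G.fstEdges {g} v = ∅ :=
      eq_empty_of_forall_notMem fun x ⟨hx, hxv⟩ => hl (by rw [h, ← hxv, hx])
    have hsnd : G.sndEdges {g} v = {g} :=
      ext fun x => ⟨And.left, fun hx => ⟨hx, (mem_singleton_iff.1 hx).symm ▸ h⟩⟩
    simp [deg_eq_ncard_add, hfst, hsnd]

lemma deg_singleton_of_not_inc (hi : ¬ G.Inc v g) : G.deg {g} v = 0 :=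
  deg_eq_zero_of_notMem_VSet (by simpa [VSet_singleton] using hi)

lemma deg_union_of_notMem_VSet (hd : Disjoint X Y) (hX : X.Finite) (hY : Y.Finite)
    (hv : v ∉ G.VSet Y) : G.deg (X ∪ Y) v = G.deg X v := by
  rw [deg_union hd hX hY, deg_eq_zero_of_notMem_VSet hv, add_zero]

lemma deg_diff_singleton_add (hX : X.Finite) (hg : g ∈ X) :
    G.deg (X \ {g}) v + G.deg {g} v = G.deg X v := by
  rw [← deg_union disjoint_sdiff_left hX.sdiff (finite_singleton g),
    sdiff_union_of_subset (singleton_subset_iff.2 hg)]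

lemma deg_diff_singleton_of_not_inc (hX : X.Finite) (hg : g ∈ X) (hi : ¬ G.Inc v g) :
    G.deg (X \ {g}) v = G.deg X v := by
  simpa [deg_singleton_of_not_inc hi] using deg_diff_singleton_add (G := G) (v := v) hX hg

lemma deg_diff_singleton_add_one (hX : X.Finite) (hg : g ∈ X) (hl : G.IsLink g)
    (hi : G.Inc v g) : G.deg (X \ {g}) v + 1 = G.deg X v := by
  simpa [deg_singleton_of_inc hl hi] using deg_diff_singleton_add (G := G) (v := v) hX hg

lemma deg_singleton_of_isLoopEdge (hl : G.IsLoopEdge g) (hi : G.Inc v g) : G.deg {g} v = 2 := by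
  have hv : G.fst g = v ∧ G.snd g = v := by unfold IsLoopEdge Inc at *; grind
  have hfst : G.fstEdges {g} v = {g} :=
    ext fun x => ⟨And.left, fun hx => ⟨hx, (mem_singleton_iff.1 hx).symm ▸ hv.1⟩⟩
  have hsnd : G.sndEdges {g} v = {g} :=
    ext fun x => ⟨And.left, fun hx => ⟨hx, (mem_singleton_iff.1 hx).symm ▸ hv.2⟩⟩
  simp [deg_eq_ncard_add, hfst, hsnd]

lemma isLink_of_deg_eq_one (hX : X.Finite) (hg : g ∈ X) (hi : G.Inc v g) (h : G.deg X v = 1) :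
    G.IsLink g := fun hl => by
  have := deg_mono (G := G) (v := v) (singleton_subset_iff.2 hg) hX
  rw [deg_singleton_of_isLoopEdge hl hi] at this
  omega

end Degree

section Connectivity

variable {V : Type u} {E : Type v} {G : MultiGraph V E} {X Y : Set E} {g x y : E} {v w : V}

lemma EdgeAdj.symm (h : G.EdgeAdj X x y) : G.EdgeAdj X y x :=
  let ⟨hx, hy, v, hvx, hvy⟩ := h
  ⟨hy, hx, v, hvy, hvx⟩

lemma EdgeAdj.mono (h : G.EdgeAdj X x y) (hx : x ∈ Y) (hy : y ∈ Y) : G.EdgeAdj Y x y :=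
  let ⟨_, _, v, hvx, hvy⟩ := h
  ⟨hx, hy, v, hvx, hvy⟩

lemma reflTransGen_edgeAdj_symm (h : Relation.ReflTransGen (G.EdgeAdj X) x y) :
    Relation.ReflTransGen (G.EdgeAdj X) y x :=
  Relation.reflTransGen_swap.1 (Relation.ReflTransGen.mono (fun _ _ h => EdgeAdj.symm h) _ _ h)

lemma reflTransGen_edgeAdj_mono (hXY : X ⊆ Y) (h : Relation.ReflTransGen (G.EdgeAdj X) x y) :
    Relation.ReflTransGen (G.EdgeAdj Y) x y :=
  Relation.ReflTransGen.mono (fun _ _ h => EdgeAdj.mono h (hXY h.1) (hXY h.2.1)) _ _ h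

lemma connectedOn_singleton : G.ConnectedOn {g} := by
  rintro x y rfl rfl
  rfl

lemma ConnectedOn.union (hX : G.ConnectedOn X) (hY : G.ConnectedOn Y)
    (hxy : ∃ x ∈ X, ∃ y ∈ Y, ∃ v, G.Inc v x ∧ G.Inc v y) : G.ConnectedOn (X ∪ Y) := by
  obtain ⟨x₀, hx₀, y₀, hy₀, v, hvx, hvy⟩ := hxy
  have hadj : G.EdgeAdj (X ∪ Y) x₀ y₀ := ⟨Or.inl hx₀, Or.inr hy₀, v, hvx, hvy⟩
  have liftX : ∀ {a b}, a ∈ X → b ∈ X → Relation.ReflTransGen (G.EdgeAdj (X ∪ Y)) a b :=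
    fun ha hb => reflTransGen_edgeAdj_mono subset_union_left (hX ha hb)
  have liftY : ∀ {a b}, a ∈ Y → b ∈ Y → Relation.ReflTransGen (G.EdgeAdj (X ∪ Y)) a b :=
    fun ha hb => reflTransGen_edgeAdj_mono subset_union_right (hY ha hb)
  have hcross : ∀ {a b}, a ∈ X → b ∈ Y → Relation.ReflTransGen (G.EdgeAdj (X ∪ Y)) a b :=
    fun ha hb => ((liftX ha hx₀).tail hadj).trans (liftY hy₀ hb)
  rintro a b (ha | ha) (hb | hb)
  exacts [liftX ha hb, hcross ha hb, reflTransGen_edgeAdj_symm (hcross hb ha), liftY ha hb]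

def component (G : MultiGraph V E) (X : Set E) (g : E) : Set E :=
  {x | x ∈ X ∧ Relation.ReflTransGen (G.EdgeAdj X) g x}

lemma component_subset : G.component X g ⊆ X := fun _ h => h.1

lemma mem_component_self (hg : g ∈ X) : g ∈ G.component X g := ⟨hg, .refl⟩

lemma mem_component_of_inc (hx : x ∈ G.component X g) (hvx : G.Inc v x) (hy : y ∈ X)
    (hvy : G.Inc v y) : y ∈ G.component X g :=
  ⟨hy, hx.2.tail ⟨hx.1, hy, v, hvx, hvy⟩⟩

lemma connectedOn_component : G.ConnectedOn (G.component X g) := by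
  have hroot : ∀ {x}, x ∈ G.component X g →
      Relation.ReflTransGen (G.EdgeAdj (G.component X g)) g x := by
    intro x hx
    induction hx.2 with
    | refl => rfl
    | @tail y x hy hyx ih =>
      have hy' : y ∈ G.component X g := ⟨hyx.1, hy⟩
      exact (ih hy').tail (hyx.mono hy' ⟨hyx.2.1, hy.tail hyx⟩)
  exact fun x y hx hy => (reflTransGen_edgeAdj_symm (hroot hx)).trans (hroot hy)

lemma deg_component (hv : v ∈ G.VSet (G.component X g)) :
    G.deg (G.component X g) v = G.deg X v := by
  obtain ⟨x, hx, hvx⟩ := hv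
  have hfst : G.fstEdges (G.component X g) v = G.fstEdges X v :=
    ext fun y => ⟨fun hy => ⟨hy.1.1, hy.2⟩,
      fun hy => ⟨mem_component_of_inc hx hvx hy.1 (Or.inl hy.2), hy.2⟩⟩
  have hsnd : G.sndEdges (G.component X g) v = G.sndEdges X v :=
    ext fun y => ⟨fun hy => ⟨hy.1.1, hy.2⟩,
      fun hy => ⟨mem_component_of_inc hx hvx hy.1 (Or.inr hy.2), hy.2⟩⟩
  rw [deg_eq_ncard_add, deg_eq_ncard_add, hfst, hsnd]

lemma ConnectedOn.exists_edgeAdj_ne (hX : G.ConnectedOn X) (hg : g ∈ X) (hx : x ∈ X)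
    (hxg : x ≠ g) : ∃ y ∈ X, y ≠ g ∧ G.EdgeAdj X g y := by
  induction hX hg hx with
  | refl => exact absurd rfl hxg
  | @tail y z _ hyz ih =>
    by_cases hyg : y = g
    · exact ⟨z, hyz.2.1, hxg, hyg ▸ hyz⟩
    · exact ih hyz.1 hyg

lemma ConnectedOn.diff_singleton (hX : G.ConnectedOn X) (hg : g ∈ X)
    (hw : ∀ x ∈ X, x ≠ g → G.EdgeAdj X g x → G.Inc w x) (hne : ∃ x ∈ X, x ≠ g) :
    G.ConnectedOn (X \ {g}) ∧ w ∈ G.VSet (X \ {g}) := by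
  classical
  obtain ⟨h₀, hh₀, hh₀g⟩ := hne
  obtain ⟨x₀, hx₀, hx₀g, hadj₀⟩ := hX.exists_edgeAdj_ne hg hh₀ hh₀g
  have hx₀' : x₀ ∈ X \ {g} := ⟨hx₀, hx₀g⟩
  have hwx₀ : G.Inc w x₀ := hw x₀ hx₀ hx₀g hadj₀
  refine ⟨?_, x₀, hx₀', hwx₀⟩
  -- a walk in `X` is rerouted through `x₀` wherever it uses `g`
  let r : E → E := fun y => if y = g then x₀ else y
  have step : ∀ y z, G.EdgeAdj X y z →
      Relation.ReflTransGen (G.EdgeAdj (X \ {g})) (r y) (r z) := by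
    intro y z hyz
    by_cases hy : y = g <;> by_cases hz : z = g
    · simp only [r, if_pos hy, if_pos hz]; rfl
    · simp only [r, if_pos hy, if_neg hz]
      exact .single ⟨hx₀', ⟨hyz.2.1, hz⟩, w, hwx₀, hw z hyz.2.1 hz (hy ▸ hyz)⟩
    · simp only [r, if_neg hy, if_pos hz]
      exact .single ⟨⟨hyz.1, hy⟩, hx₀', w, hw y hyz.1 hy (hz ▸ hyz.symm), hwx₀⟩
    · simp only [r, if_neg hy, if_neg hz]
      exact .single (hyz.mono ⟨hyz.1, hy⟩ ⟨hyz.2.1, hz⟩)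
  have reroute : ∀ {y z}, Relation.ReflTransGen (G.EdgeAdj X) y z →
      Relation.ReflTransGen (G.EdgeAdj (X \ {g})) (r y) (r z) := by
    intro y z hyz
    induction hyz with
    | refl => rfl
    | tail _ hadj ih => exact ih.trans (step _ _ hadj)
  intro y z hy hz
  have hyz := reroute (hX hy.1 hz.1)
  simpa only [r, if_neg (show y ≠ g from hy.2), if_neg (show z ≠ g from hz.2)] using hyz

lemma eq_singleton_of_isLoopEdge (hX : X.Finite) (hdeg : ∀ v ∈ G.VSet X, G.deg X v ≤ 2)
    (hconn : G.ConnectedOn X) (hg : g ∈ X) (hl : G.IsLoopEdge g) : X = {g} := by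
  refine eq_singleton_iff_unique_mem.2 ⟨hg, fun x hx => by_contra fun hxg => ?_⟩
  obtain ⟨y, hy, hyg, -, -, w, hwg, hwy⟩ := hconn.exists_edgeAdj_ne hg hx hxg
  have h1 := one_le_deg (hX.sdiff (t := {g})) ⟨y, ⟨hy, hyg⟩, hwy⟩
  have h2 := deg_diff_singleton_add (G := G) (v := w) hX hg
  rw [deg_singleton_of_isLoopEdge hl hwg] at h2
  have := hdeg w ⟨g, hg, hwg⟩
  omega

end Connectivity

section Paths

variable {V : Type u} {E : Type v} {G : MultiGraph V E} {X Y P Q : Set E} {g : E}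
  {a b c v w z : V}

lemma eq_of_subset_of_deg_le (hY : Y.Finite) (hXY : X ⊆ Y) (hX : X.Nonempty)
    (hconn : G.ConnectedOn Y) (hdeg : ∀ v ∈ G.VSet X, G.deg Y v ≤ G.deg X v) : X = Y := by
  obtain ⟨g, hg⟩ := hX
  refine hXY.antisymm fun y hy => ?_
  induction hconn (hXY hg) hy with
  | refl => exact hg
  | tail _ hadj ih =>
    obtain ⟨-, hz, v, hvy, hvz⟩ := id hadj
    exact mem_of_subset_of_deg_le hXY hY (hdeg v ⟨_, ih hadj.1, hvy⟩) hz hvz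

lemma IsCycle.eq_of_subset (hX : G.IsCycle X) (hY : G.IsCycle Y) (hXY : X ⊆ Y) : X = Y :=
  eq_of_subset_of_deg_le hY.1 hXY hX.2.1 hY.2.2.1 fun v hv => by
    rw [hX.2.2.2 v hv, hY.2.2.2 v (VSet_mono hXY hv)]

lemma IsPath.deg_eq_two (hP : G.IsPath P) (hv : v ∈ G.VSet P) (hvP : v ∉ G.Ends P) :
    G.deg P v = 2 := by
  have := one_le_deg hP.1 hv
  have := hP.2.2.2.1 v hv
  have : G.deg P v ≠ 1 := fun h => hvP ⟨hv, h⟩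
  omega

lemma IsPath.ends_eq_of_subset (hP : G.IsPath P) (h : G.Ends P ⊆ {a, b}) (hab : a ≠ b) :
    G.Ends P = {a, b} :=
  eq_of_subset_of_ncard_le h (by rw [hP.2.2.2.2, ncard_pair hab]) (toFinite _)

lemma IsPath.exists_ends_eq (hP : G.IsPath P) (hv : v ∈ G.Ends P) : ∃ b, G.Ends P = {b, v} := by
  obtain ⟨p, q, -, hE⟩ := ncard_eq_two.1 hP.2.2.2.2
  rw [hE] at hv ⊢
  rcases hv with rfl | rfl
  exacts [⟨q, pair_comm _ _⟩, ⟨p, rfl⟩]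

lemma IsPath.ne_of_ends_eq (hP : G.IsPath P) (hE : G.Ends P = {a, b}) : a ≠ b := by
  rintro rfl
  have := hP.2.2.2.2
  simp [hE] at this

lemma IsCycle.not_subset_of_isPath (hX : G.IsCycle X) (hP : G.IsPath P) : ¬ X ⊆ P := by
  intro hXP
  have hXP : X = P := eq_of_subset_of_deg_le hP.1 hXP hX.2.1 hP.2.2.1 fun v hv => by
    rw [hX.2.2.2 v hv]
    exact hP.2.2.2.1 v (VSet_mono hXP hv)
  obtain ⟨a, b, -, hE⟩ := ncard_eq_two.1 hP.2.2.2.2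
  have ha : a ∈ G.Ends P := hE ▸ mem_insert a {b}
  have := hX.2.2.2 a (hXP ▸ ha.1)
  rw [hXP, ha.2] at this
  omega

lemma isPath_singleton (hl : G.IsLink g) (ha : G.Inc a g) (hb : G.Inc b g) (hab : a ≠ b) :
    G.IsPath {g} ∧ G.Ends {g} = {a, b} := by
  have hV : G.VSet {g} = {a, b} := by
    ext z
    rw [VSet_singleton]
    exact ⟨eq_or_eq_of_inc ha hb hab, by rintro (rfl | rfl) <;> assumption⟩
  have hdeg : ∀ z ∈ G.VSet {g}, G.deg {g} z = 1 := fun z hz =>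
    deg_singleton_of_inc hl (by simpa [VSet_singleton] using hz)
  have hE : G.Ends {g} = {a, b} := by
    rw [← hV]
    exact ext fun z => ⟨And.left, fun hz => ⟨hz, hdeg z hz⟩⟩
  refine ⟨⟨finite_singleton g, singleton_nonempty g, connectedOn_singleton,
    fun z hz => (hdeg z hz).le.trans one_le_two, ?_⟩, hE⟩
  rw [hE, ncard_pair hab]

lemma IsPath.union (hP : G.IsPath P) (hQ : G.IsPath Q) (hPe : G.Ends P = {a, b})
    (hQe : G.Ends Q = {b, c}) (hd : Disjoint P Q) (hV : G.VSet P ∩ G.VSet Q ⊆ {b}) :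
    G.IsPath (P ∪ Q) ∧ G.Ends (P ∪ Q) = {a, c} := by
  have hab := hP.ne_of_ends_eq hPe
  have hbc := hQ.ne_of_ends_eq hQe
  have haP : a ∈ G.Ends P := hPe ▸ mem_insert a {b}
  have hbP : b ∈ G.Ends P := hPe ▸ mem_insert_of_mem a rfl
  have hbQ : b ∈ G.Ends Q := hQe ▸ mem_insert b {c}
  have hcQ : c ∈ G.Ends Q := hQe ▸ mem_insert_of_mem b rfl
  have honly : ∀ v ∈ G.VSet P, v ∈ G.VSet Q → v = b := fun v hP hQ => hV ⟨hP, hQ⟩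
  have hdegP : ∀ v ∈ G.VSet P, v ≠ b → G.deg (P ∪ Q) v = G.deg P v := fun v hv hvb =>
    deg_union_of_notMem_VSet hd hP.1 hQ.1 fun h => hvb (honly v hv h)
  have hdegQ : ∀ v ∈ G.VSet Q, v ≠ b → G.deg (P ∪ Q) v = G.deg Q v := fun v hv hvb => by
    rw [union_comm]
    exact deg_union_of_notMem_VSet hd.symm hQ.1 hP.1 fun h => hvb (honly v h hv)
  have hdegb : G.deg (P ∪ Q) b = 2 := by rw [deg_union hd hP.1 hQ.1, hbP.2, hbQ.2]
  have hE : G.Ends (P ∪ Q) = {a, c} := by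
    ext v
    simp only [Ends, VSet_union, mem_ofPred_eq, mem_union, mem_insert_iff, mem_singleton_iff]
    constructor
    · rintro ⟨hv | hv, hv1⟩ <;> (obtain rfl | hvb := eq_or_ne v b; · omega)
      · rw [hdegP v hv hvb] at hv1
        exact .inl (((hPe ▸ ⟨hv, hv1⟩ : v ∈ ({a, b} : Set V))).resolve_right hvb)
      · rw [hdegQ v hv hvb] at hv1
        exact .inr (((hQe ▸ ⟨hv, hv1⟩ : v ∈ ({b, c} : Set V))).resolve_left hvb)
    · rintro (rfl | rfl)
      · exact ⟨.inl haP.1, (hdegP v haP.1 hab).trans haP.2⟩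
      · exact ⟨.inr hcQ.1, (hdegQ v hcQ.1 hbc.symm).trans hcQ.2⟩
  have hconn : G.ConnectedOn (P ∪ Q) := by
    obtain ⟨p, hp, hbp⟩ := hbP.1
    obtain ⟨q, hq, hbq⟩ := hbQ.1
    exact hP.2.2.1.union hQ.2.2.1 ⟨p, hp, q, hq, b, hbp, hbq⟩
  have hdeg2 : ∀ v ∈ G.VSet (P ∪ Q), G.deg (P ∪ Q) v ≤ 2 := by
    rintro v hv
    obtain rfl | hvb := eq_or_ne v b
    · exact hdegb.le
    rw [VSet_union] at hv
    rcases hv with hv | hv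
    · exact (hdegP v hv hvb).trans_le (hP.2.2.2.1 v hv)
    · exact (hdegQ v hv hvb).trans_le (hQ.2.2.2.1 v hv)
  refine ⟨⟨hP.1.union hQ.1, hP.2.1.mono subset_union_left, hconn, hdeg2, ?_⟩, hE⟩
  rw [hE, ncard_pair fun hac => hbc (honly c (by rw [← hac]; exact haP.1) hcQ.1).symm]

lemma IsPath.isCycle_union (hP : G.IsPath P) (hQ : G.IsPath Q) (hPe : G.Ends P = {a, b})
    (hQe : G.Ends Q = {a, b}) (hd : Disjoint P Q) (hV : G.VSet P ∩ G.VSet Q ⊆ {a, b}) :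
    G.IsCycle (P ∪ Q) := by
  have hends : ∀ {v}, v ∈ G.Ends P ↔ v ∈ G.Ends Q := by simp [hPe, hQe]
  have hconn : G.ConnectedOn (P ∪ Q) := by
    have haP : a ∈ G.Ends P := hPe ▸ mem_insert a {b}
    obtain ⟨p, hp, hap⟩ := haP.1
    obtain ⟨q, hq, haq⟩ := (hends.1 haP).1
    exact hP.2.2.1.union hQ.2.2.1 ⟨p, hp, q, hq, a, hap, haq⟩
  refine ⟨hP.1.union hQ.1, hP.2.1.mono subset_union_left, hconn, fun v hv => ?_⟩
  by_cases hvP : v ∈ G.Ends P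
  · rw [deg_union hd hP.1 hQ.1, hvP.2, (hends.1 hvP).2]
  have hvQ : v ∉ G.Ends Q := fun h => hvP (hends.2 h)
  have hvPQ : ¬ (v ∈ G.VSet P ∧ v ∈ G.VSet Q) := fun h => hvP (by rw [hPe]; exact hV h)
  rw [VSet_union] at hv
  rcases hv with hv | hv
  · rw [deg_union_of_notMem_VSet hd hP.1 hQ.1 fun h => hvPQ ⟨hv, h⟩, hP.deg_eq_two hv hvP]
  · rw [union_comm, deg_union_of_notMem_VSet hd.symm hQ.1 hP.1 fun h => hvPQ ⟨h, hv⟩,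
      hQ.deg_eq_two hv hvQ]

lemma ConnectedOn.diff_pendant (hconn : G.ConnectedOn X) (hg : g ∈ X) (hvg : G.Inc v g)
    (hv : ∀ x ∈ X, G.Inc v x → x = g) (hwg : G.Inc w g) (hvw : v ≠ w) (hX : X ≠ {g}) :
    G.ConnectedOn (X \ {g}) ∧ w ∈ G.VSet (X \ {g}) ∧ v ∉ G.VSet (X \ {g}) := by
  have hne : ∃ x ∈ X, x ≠ g := by
    by_contra! h
    exact hX (eq_singleton_iff_unique_mem.2 ⟨hg, h⟩)
  have hnbr : ∀ x ∈ X, x ≠ g → G.EdgeAdj X g x → G.Inc w x := by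
    rintro x hx hxg ⟨-, -, z, hzg, hzx⟩
    rcases eq_or_eq_of_inc hvg hwg hvw hzg with rfl | rfl
    exacts [absurd (hv x hx hzx) hxg, hzx]
  obtain ⟨hconn', hw'⟩ := hconn.diff_singleton hg hnbr hne
  exact ⟨hconn', hw', fun ⟨x, hx, hvx⟩ => hx.2 (hv x hx.1 hvx)⟩

theorem isCycle_or_isPath (hX : X.Finite) (hne : X.Nonempty) (hconn : G.ConnectedOn X)
    (hdeg : ∀ v ∈ G.VSet X, G.deg X v ≤ 2) : G.IsCycle X ∨ G.IsPath X := by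
  induction hn : X.ncard using Nat.strong_induction_on generalizing X with
  | _ n ih =>
  by_cases hall : ∀ v ∈ G.VSet X, G.deg X v = 2
  · exact .inl ⟨hX, hne, hconn, hall⟩
  right
  obtain ⟨v, hvX, hv1⟩ : ∃ v ∈ G.VSet X, G.deg X v = 1 := by
    obtain ⟨v, hv, hv2⟩ := not_forall₂.1 hall
    exact ⟨v, hv, by have := one_le_deg hX hv; have := hdeg v hv; omega⟩
  obtain ⟨g, hg, hvg, hv⟩ := exists_unique_inc_of_deg_eq_one hX hv1
  have hl := isLink_of_deg_eq_one hX hg hvg hv1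
  obtain ⟨w, hwg, hwv⟩ := hl.exists_inc_ne hvg
  by_cases hXg : X = {g}
  · exact hXg ▸ (isPath_singleton hl hvg hwg hwv.symm).1
  obtain ⟨hconn', hw', hv'⟩ := hconn.diff_pendant hg hvg hv hwg hwv.symm hXg
  have hdeg' : ∀ z ∈ G.VSet (X \ {g}), G.deg (X \ {g}) z ≤ 2 := fun z hz =>
    (deg_mono sdiff_subset hX).trans (hdeg z (VSet_mono sdiff_subset hz))
  have hw1 : G.deg (X \ {g}) w = 1 := by
    have := deg_diff_singleton_add_one hX hg hl hwg
    have := hdeg w ⟨g, hg, hwg⟩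
    have := one_le_deg hX.sdiff hw'
    omega
  have hne' : (X \ {g}).Nonempty := let ⟨x, hx, _⟩ := hw'; ⟨x, hx⟩
  have hlt : (X \ {g}).ncard < n := hn ▸ ncard_sdiff_singleton_lt_of_mem hg hX
  rcases ih _ hlt hX.sdiff hne' hconn' hdeg' rfl with hC | hP
  · exact absurd (hC.2.2.2 w hw') (by omega)
  obtain ⟨b, hE⟩ := hP.exists_ends_eq ⟨hw', hw1⟩
  have hV : G.VSet (X \ {g}) ∩ G.VSet {g} ⊆ {w} := by
    rintro z ⟨hz, hzg⟩
    rw [VSet_singleton] at hzg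
    exact (eq_or_eq_of_inc hvg hwg hwv.symm hzg).resolve_left (by rintro rfl; exact hv' hz)
  obtain ⟨hgpath, hgE⟩ := isPath_singleton hl hwg hvg hwv
  have hunion := (hP.union hgpath hE hgE disjoint_sdiff_left hV).1
  rwa [sdiff_union_of_subset (singleton_subset_iff.2 hg)] at hunion

end Paths

section Splitting

variable {V : Type u} {E : Type v} {G : MultiGraph V E} {P C : Set E} {g : E} {a b v w x y : V}

lemma IsPath.ends_eq_of_mem (hP : G.IsPath P) (ha : a ∈ G.Ends P) (hb : b ∈ G.Ends P)
    (hab : a ≠ b) : G.Ends P = {a, b} :=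
  (eq_of_subset_of_ncard_le (pair_subset ha hb) (by rw [hP.2.2.2.2, ncard_pair hab])
    (finite_of_ncard_ne_zero (by rw [hP.2.2.2.2]; omega))).symm

lemma IsPath.diff_end_edge (hP : G.IsPath P) (hE : G.Ends P = {x, y}) (hg : g ∈ P)
    (hxg : G.Inc x g) (hwg : G.Inc w g) (hxw : x ≠ w) (hPg : P ≠ {g}) :
    G.IsPath (P \ {g}) ∧ G.Ends (P \ {g}) = {w, y} ∧ x ∉ G.VSet (P \ {g}) := by
  have hxE : x ∈ G.Ends P := hE ▸ mem_insert x {y}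
  have hyE : y ∈ G.Ends P := hE ▸ mem_insert_of_mem x rfl
  have hxy := hP.ne_of_ends_eq hE
  have hl := isLink_of_deg_eq_one hP.1 hg hxg hxE.2
  have hx : ∀ z ∈ P, G.Inc x z → z = g := by
    obtain ⟨g₀, -, -, h₀⟩ := exists_unique_inc_of_deg_eq_one hP.1 hxE.2
    exact fun z hz hxz => (h₀ z hz hxz).trans (h₀ g hg hxg).symm
  obtain ⟨hconn, hw, hx'⟩ := hP.2.2.1.diff_pendant hg hxg hx hwg hxw hPg
  have hne : (P \ {g}).Nonempty := let ⟨z, hz, _⟩ := hw; ⟨z, hz⟩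
  have hdeg : ∀ z ∈ G.VSet (P \ {g}), G.deg (P \ {g}) z ≤ 2 := fun z hz =>
    (deg_mono sdiff_subset hP.1).trans (hP.2.2.2.1 z (VSet_mono sdiff_subset hz))
  have hpath : G.IsPath (P \ {g}) :=
    (isCycle_or_isPath hP.1.sdiff hne hconn hdeg).resolve_left
      fun hC => hC.not_subset_of_isPath hP sdiff_subset
  have hw1 := deg_diff_singleton_add_one hP.1 hg hl hwg
  have hwy : w ≠ y := by
    rintro rfl
    have := one_le_deg hP.1.sdiff hw
    rw [hyE.2] at hw1
    omega
  have hwE : w ∈ G.Ends (P \ {g}) := by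
    refine ⟨hw, ?_⟩
    have hwP : w ∉ G.Ends P := by rw [hE]; rintro (rfl | rfl) <;> contradiction
    rw [hP.deg_eq_two (VSet_mono sdiff_subset hw) hwP] at hw1
    omega
  have hyg : ¬ G.Inc y g := fun h => by
    rcases eq_or_eq_of_inc hxg hwg hxw h with rfl | rfl <;> contradiction
  have hyE' : y ∈ G.Ends (P \ {g}) := by
    have hy1 : G.deg (P \ {g}) y = 1 := (deg_diff_singleton_of_not_inc hP.1 hg hyg).trans hyE.2
    exact ⟨mem_VSet_of_deg_ne_zero (by omega), hy1⟩
  exact ⟨hpath, hpath.ends_eq_of_mem hwE hyE' hwy, hx'⟩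

theorem IsPath.exists_split (hP : G.IsPath P) (hE : G.Ends P = {x, y}) (hv : v ∈ G.VSet P)
    (hvE : v ∉ G.Ends P) :
    ∃ A B, A ∪ B = P ∧ Disjoint A B ∧ G.IsPath A ∧ G.IsPath B ∧
      G.Ends A = {x, v} ∧ G.Ends B = {v, y} := by
  induction hn : P.ncard using Nat.strong_induction_on generalizing P x with
  | _ n ih =>
  have hxE : x ∈ G.Ends P := hE ▸ mem_insert x {y}
  obtain ⟨g, hg, hxg, -⟩ := exists_unique_inc_of_deg_eq_one hP.1 hxE.2
  have hl := isLink_of_deg_eq_one hP.1 hg hxg hxE.2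
  obtain ⟨w, hwg, hwx⟩ := hl.exists_inc_ne hxg
  have hvx : v ≠ x := fun h => hvE (h ▸ hxE)
  have hPg : P ≠ {g} := by
    rintro rfl
    have := hP.deg_eq_two hv hvE
    rw [deg_singleton_of_inc hl (by simpa [VSet_singleton] using hv)] at this
    omega
  obtain ⟨hP', hE', hx'⟩ := hP.diff_end_edge hE hg hxg hwg hwx.symm hPg
  have hunion : {g} ∪ (P \ {g}) = P := union_sdiff_cancel (singleton_subset_iff.2 hg)
  have hsplit : ∀ {A}, A ⊆ P \ {g} → G.VSet {g} ∩ G.VSet A ⊆ {w} := by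
    rintro A hA z ⟨hzg, hzA⟩
    rw [VSet_singleton] at hzg
    refine (eq_or_eq_of_inc hxg hwg hwx.symm hzg).resolve_left ?_
    rintro rfl
    exact hx' (VSet_mono hA hzA)
  obtain ⟨hgpath, hgE⟩ := isPath_singleton hl hxg hwg hwx.symm
  by_cases hvw : v = w
  · subst hvw
    exact ⟨{g}, P \ {g}, hunion, disjoint_sdiff_right, hgpath, hP', hgE, hE'⟩
  have hvg : ¬ G.Inc v g := fun h => by
    rcases eq_or_eq_of_inc hxg hwg hwx.symm h with rfl | rfl <;> contradiction
  have hv' : v ∈ G.VSet (P \ {g}) := by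
    obtain ⟨z, hz, hvz⟩ := hv
    exact ⟨z, ⟨hz, by rintro rfl; exact hvg hvz⟩, hvz⟩
  have hvE' : v ∉ G.Ends (P \ {g}) := by
    rw [hE']; rintro (rfl | rfl) <;> simp_all
  obtain ⟨A, B, hAB, hd, hA, hB, hAE, hBE⟩ :=
    ih _ (hn ▸ ncard_sdiff_singleton_lt_of_mem hg hP.1) hP' hE' hv' hvE' rfl
  have hAsub : A ⊆ P \ {g} := hAB ▸ subset_union_left
  have hgA : Disjoint {g} A := disjoint_singleton_left.2 fun h => (hAsub h).2 rfl
  have hgB : Disjoint {g} B :=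
    disjoint_singleton_left.2 fun h => ((hAB ▸ subset_union_right : B ⊆ P \ {g}) h).2 rfl
  obtain ⟨hgApath, hgAE⟩ := hgpath.union hA hgE hAE hgA (hsplit hAsub)
  refine ⟨{g} ∪ A, B, ?_, disjoint_union_left.2 ⟨hgB, hd⟩, hgApath, hB, hgAE, hBE⟩
  rw [union_assoc, hAB, hunion]

theorem IsCycle.diff_singleton (hC : G.IsCycle C) (hg : g ∈ C) (hl : G.IsLink g)
    (ha : G.Inc a g) (hb : G.Inc b g) (hab : a ≠ b) (hCg : C ≠ {g}) :
    G.IsPath (C \ {g}) ∧ G.Ends (C \ {g}) = {a, b} := by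
  have hfin : (C \ {g}).Finite := hC.1.sdiff
  have hdeg : ∀ z ∈ G.VSet (C \ {g}), G.deg (C \ {g}) z ≤ 2 := fun z hz =>
    (deg_mono sdiff_subset hC.1).trans (hC.2.2.2 z (VSet_mono sdiff_subset hz)).le
  have hends : ∀ z ∈ G.VSet (C \ {g}), G.deg (C \ {g}) z = 1 → z = a ∨ z = b := by
    intro z hz hz1
    by_cases hzg : G.Inc z g
    · exact eq_or_eq_of_inc ha hb hab hzg
    · rw [deg_diff_singleton_of_not_inc hC.1 hg hzg,
        hC.2.2.2 z (VSet_mono sdiff_subset hz)] at hz1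
      omega
  have hpiece : ∀ K ⊆ C \ {g}, K.Nonempty → G.ConnectedOn K →
      (∀ z ∈ G.VSet K, G.deg K z = G.deg (C \ {g}) z) → G.IsPath K ∧ G.Ends K = {a, b} := by
    intro K hK hne hconn hKdeg
    have hpath : G.IsPath K := by
      refine (isCycle_or_isPath (hfin.subset hK) hne hconn fun z hz => ?_).resolve_left
        fun hKC => ?_
      · exact (hKdeg z hz).trans_le (hdeg z (VSet_mono hK hz))
      · have := hKC.eq_of_subset hC (hK.trans sdiff_subset)
        exact (hK (this ▸ hg)).2 rfl
    refine ⟨hpath, hpath.ends_eq_of_subset (fun z hz => hends z (VSet_mono hK hz.1) ?_) hab⟩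
    rw [← hKdeg z hz.1, hz.2]
  have ha1 : G.deg (C \ {g}) a = 1 := by
    have := deg_diff_singleton_add_one hC.1 hg hl ha
    rw [hC.2.2.2 a ⟨g, hg, ha⟩] at this
    omega
  obtain ⟨g₂, -, -, hg₂⟩ := exists_unique_inc_of_deg_eq_one hfin ha1
  -- every component contains the only edge `g₂` of `C \ {g}` at `a`, so there is just one
  have hmem : ∀ x ∈ C \ {g}, g₂ ∈ G.component (C \ {g}) x := by
    intro x hx
    have hK := hpiece _ component_subset ⟨x, mem_component_self hx⟩ connectedOn_component
      fun z hz => deg_component hz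
    obtain ⟨t, ht, hat⟩ := (hK.2 ▸ mem_insert a {b} : a ∈ G.Ends _).1
    exact hg₂ t (component_subset ht) hat ▸ ht
  refine hpiece _ subset_rfl ?_ (fun x y hx hy => ?_) fun _ _ => rfl
  · obtain ⟨x, hx, hxg⟩ : ∃ x ∈ C, x ≠ g := by
      by_contra! h
      exact hCg (eq_singleton_iff_unique_mem.2 ⟨hg, h⟩)
    exact ⟨x, hx, hxg⟩
  · exact (hmem x hx).2.trans (reflTransGen_edgeAdj_symm (hmem y hy).2)

lemma IsCycle.isLink_of_mem_VSet (hC : G.IsCycle C) (hg : g ∈ C) (ha : a ∈ G.VSet C)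
    (hb : b ∈ G.VSet C) (hab : a ≠ b) : G.IsLink g := fun hl => by
  have hCg := eq_singleton_of_isLoopEdge hC.1 (fun v hv => (hC.2.2.2 v hv).le) hC.2.2.1 hg hl
  rw [hCg, VSet_singleton] at ha hb
  unfold Inc at ha hb
  grind

theorem IsCycle.exists_split (hC : G.IsCycle C) (ha : a ∈ G.VSet C) (hb : b ∈ G.VSet C)
    (hab : a ≠ b) :
    ∃ R₁ R₂, R₁ ∪ R₂ = C ∧ Disjoint R₁ R₂ ∧ G.IsPath R₁ ∧ G.IsPath R₂ ∧
      G.Ends R₁ = {a, b} ∧ G.Ends R₂ = {a, b} := by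
  obtain ⟨g, hg, hag⟩ := ha
  have hl := hC.isLink_of_mem_VSet hg ⟨g, hg, hag⟩ hb hab
  obtain ⟨c, hcg, hca⟩ := hl.exists_inc_ne hag
  have hCg : C ≠ {g} := fun h => by
    have := hC.2.2.2 a ⟨g, hg, hag⟩
    rw [h, deg_singleton_of_inc hl hag] at this
    omega
  obtain ⟨hP, hPE⟩ := hC.diff_singleton hg hl hag hcg hca.symm hCg
  have hunion : C \ {g} ∪ {g} = C := sdiff_union_of_subset (singleton_subset_iff.2 hg)
  obtain ⟨hgpath, hgE⟩ := isPath_singleton hl hcg hag hca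
  by_cases hbc : b = c
  · subst hbc
    refine ⟨C \ {g}, {g}, hunion, disjoint_sdiff_left, hP, hgpath, hPE, ?_⟩
    rw [hgE, pair_comm]
  have hbg : ¬ G.Inc b g := fun h => by
    rcases eq_or_eq_of_inc hag hcg hca.symm h with rfl | rfl <;> contradiction
  have hb' : b ∈ G.VSet (C \ {g}) := by
    obtain ⟨t, ht, hbt⟩ := hb
    exact ⟨t, ⟨ht, by rintro rfl; exact hbg hbt⟩, hbt⟩
  have hbE : b ∉ G.Ends (C \ {g}) := by
    rw [hPE]; rintro (rfl | rfl) <;> contradiction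
  obtain ⟨A, B, hAB, hd, hA, hB, hAE, hBE⟩ := hP.exists_split hPE hb' hbE
  have haB : a ∉ G.VSet B := by
    rintro ⟨t, ht, hat⟩
    obtain ⟨s, hs, has⟩ := (hAE ▸ mem_insert a {b} : a ∈ G.Ends A).1
    have h2 := two_le_deg hP.1 (hAB ▸ mem_union_left B hs) (hAB ▸ mem_union_right A ht)
      (by rintro rfl; exact disjoint_left.1 hd hs ht) has hat
    have h1 := (hPE ▸ mem_insert a {c} : a ∈ G.Ends (C \ {g})).2
    omega
  have hV : G.VSet B ∩ G.VSet {g} ⊆ {c} := by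
    rintro z ⟨hzB, hzg⟩
    rw [VSet_singleton] at hzg
    exact (eq_or_eq_of_inc hcg hag hca hzg).resolve_right (by rintro rfl; exact haB hzB)
  have hgB : Disjoint B {g} :=
    disjoint_singleton_right.2 fun h => ((hAB ▸ subset_union_right : B ⊆ C \ {g}) h).2 rfl
  obtain ⟨hBg, hBgE⟩ := hB.union hgpath hBE hgE hgB hV
  refine ⟨A, B ∪ {g}, by rw [← union_assoc, hAB, hunion], ?_, hA, hBg, hAE, ?_⟩
  · exact disjoint_union_right.2 ⟨hd, disjoint_singleton_right.2
      fun h => ((hAB ▸ subset_union_left : A ⊆ C \ {g}) h).2 rfl⟩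
  · rw [hBgE, pair_comm]

end Splitting

section Ears

variable {V : Type u} {E : Type v} {G : MultiGraph V E} {C D S : Set E} {g e f : E}
  {a b u : V} {W : Set V}

lemma IsCycle.eq_or_eq_of_inc (hC : G.IsCycle C) (he : e ∈ C) (hf : f ∈ C) (hef : e ≠ f)
    (hue : G.Inc u e) (huf : G.Inc u f) (hg : g ∈ C) (hug : G.Inc u g) : g = e ∨ g = f := by
  by_contra! h
  have h3 : ({e, f, g} : Set E).ncard = 3 := by
    rw [ncard_insert_of_notMem (by simp [hef, h.1.symm]), ncard_pair h.2.symm]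
  have := ncard_le_deg (G := G) (v := u) hC.1 (insert_subset he (pair_subset hf hg))
    (by simp [hue, huf, hug])
  rw [h3, hC.2.2.2 u ⟨e, he, hue⟩] at this
  omega

theorem IsPath.exists_subpath_inter_eq (hS : G.IsPath S) (hW : G.Ends S ⊆ W) :
    ∃ Q a b, Q ⊆ S ∧ G.IsPath Q ∧ G.Ends Q = {a, b} ∧ G.VSet Q ∩ W = {a, b} := by
  induction hn : S.ncard using Nat.strong_induction_on generalizing S with
  | _ n ih =>
  obtain ⟨a, b, hab, hE⟩ := ncard_eq_two.1 hS.2.2.2.2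
  have ha : a ∈ G.Ends S := hE ▸ mem_insert a {b}
  have hb : b ∈ G.Ends S := hE ▸ mem_insert_of_mem a rfl
  by_cases hint : G.VSet S ∩ W ⊆ {a, b}
  · refine ⟨S, a, b, subset_rfl, hS, hE, hint.antisymm ?_⟩
    rintro z (rfl | rfl)
    exacts [⟨ha.1, hW ha⟩, ⟨hb.1, hW hb⟩]
  obtain ⟨v, ⟨hvS, hvW⟩, hvab⟩ := not_subset.1 hint
  obtain ⟨A, B, hAB, hd, hA, hB, hAE, -⟩ := hS.exists_split hE hvS (hE ▸ hvab)
  have hAS : A ⊆ S := hAB ▸ subset_union_left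
  have hlt : A.ncard < n := by
    have hBS : B ⊆ S := hAB ▸ subset_union_right
    have := (ncard_pos (hS.1.subset hBS)).2 hB.2.1
    rw [← hn, ← hAB, ncard_union_eq hd (hS.1.subset hAS) (hS.1.subset hBS)]
    omega
  obtain ⟨Q, a', b', hQA, hQ⟩ := ih _ hlt hA (by rw [hAE]; exact pair_subset (hW ha) hvW) rfl
  exact ⟨Q, a', b', hQA.trans hAS, hQ⟩

theorem IsCycle.exists_ear (hC : G.IsCycle C) (hCD : (C ∩ D).Nonempty)
    (hne : (C \ D).Nonempty) :
    ∃ Q a b, Q ⊆ C \ D ∧ G.IsPath Q ∧ G.Ends Q = {a, b} ∧ G.VSet Q ∩ G.VSet D = {a, b} := by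
  obtain ⟨g, hg⟩ := hne
  have hK : G.component (C \ D) g ⊆ C \ D := component_subset
  have hpath : G.IsPath (G.component (C \ D) g) := by
    refine (isCycle_or_isPath (hC.1.sdiff.subset hK) ⟨g, mem_component_self hg⟩
      connectedOn_component fun z hz => ?_).resolve_left fun hKC => ?_
    · rw [deg_component hz]
      exact (deg_mono sdiff_subset hC.1).trans
        (hC.2.2.2 z (VSet_mono (hK.trans sdiff_subset) hz)).le
    · obtain ⟨x, hxC, hxD⟩ := hCD
      rw [← hKC.eq_of_subset hC (hK.trans sdiff_subset)] at hxC
      exact (hK hxC).2 hxD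
  -- an end `z` of the component has only one edge outside `D`, and degree two in `C`
  have hends : G.Ends (G.component (C \ D) g) ⊆ G.VSet D := by
    rintro z ⟨hzK, hz1⟩
    rw [deg_component hzK] at hz1
    by_contra hzD
    have := deg_union (G := G) (v := z) disjoint_sdiff_inter hC.1.sdiff (hC.1.inter_of_left D)
    rw [sdiff_union_inter, hC.2.2.2 z (VSet_mono (hK.trans sdiff_subset) hzK),
      deg_eq_zero_of_notMem_VSet fun h => hzD (VSet_mono inter_subset_right h)] at this
    omega
  obtain ⟨Q, a, b, hQK, hQ⟩ := hpath.exists_subpath_inter_eq hends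
  exact ⟨Q, a, b, hQK.trans hK, hQ⟩

theorem IsCycle.exists_ear_exchange (hC : G.IsCycle C) (hD : G.IsCycle D) (heC : e ∈ C)
    (hfC : f ∈ C) (heD : e ∈ D) (hfD : f ∈ D) (hef : e ≠ f) (hue : G.Inc u e)
    (huf : G.Inc u f) (hCD : ¬ C ⊆ D) :
    ∃ Q R₁ R₂, Q ⊆ C \ D ∧ R₁ ∪ R₂ = D ∧ Disjoint R₁ R₂ ∧ e ∈ R₁ ∧ f ∈ R₁ ∧
      G.IsCycle (Q ∪ R₁) ∧ G.IsCycle (Q ∪ R₂) ∧ u ∉ G.VSet (Q ∪ R₂) := by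
  obtain ⟨Q, a, b, hQ, hQpath, hQE, hQD⟩ := hC.exists_ear ⟨e, heC, heD⟩ (sdiff_nonempty.2 hCD)
  have hab := hQpath.ne_of_ends_eq hQE
  have haQD : a ∈ G.VSet Q ∩ G.VSet D := hQD ▸ mem_insert a {b}
  have hbQD : b ∈ G.VSet Q ∩ G.VSet D := hQD ▸ mem_insert_of_mem a rfl
  have huQ : u ∉ G.VSet Q := by
    rintro ⟨q, hq, huq⟩
    rcases hC.eq_or_eq_of_inc heC hfC hef hue huf (hQ hq).1 huq with rfl | rfl
    exacts [(hQ hq).2 heD, (hQ hq).2 hfD]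
  obtain ⟨R₁, R₂, hR, hd, hR₁, hR₂, hR₁E, hR₂E, heR₁⟩ : ∃ R₁ R₂, R₁ ∪ R₂ = D ∧
      Disjoint R₁ R₂ ∧ G.IsPath R₁ ∧ G.IsPath R₂ ∧ G.Ends R₁ = {a, b} ∧ G.Ends R₂ = {a, b} ∧
      e ∈ R₁ := by
    obtain ⟨R₁, R₂, hR, hd, hR₁, hR₂, hR₁E, hR₂E⟩ := hD.exists_split haQD.2 hbQD.2 hab
    rcases (hR ▸ heD : e ∈ R₁ ∪ R₂) with he | he
    · exact ⟨R₁, R₂, hR, hd, hR₁, hR₂, hR₁E, hR₂E, he⟩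
    · exact ⟨R₂, R₁, union_comm R₁ R₂ ▸ hR, hd.symm, hR₂, hR₁, hR₂E, hR₁E, he⟩
  have hR₁D : R₁ ⊆ D := hR ▸ subset_union_left
  have hR₂D : R₂ ⊆ D := hR ▸ subset_union_right
  -- `u` is an interior vertex of `R₁`, so both edges of `D` at `u` lie in `R₁`
  have hfR₁ : f ∈ R₁ := by
    have huE : u ∉ G.Ends R₁ := by
      rw [hR₁E]; rintro (rfl | rfl)
      exacts [huQ haQD.1, huQ hbQD.1]
    refine mem_of_subset_of_deg_le hR₁D hD.1 ?_ hfD huf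
    rw [hD.2.2.2 u ⟨e, heD, hue⟩, hR₁.deg_eq_two ⟨e, heR₁, hue⟩ huE]
  have huR₂ : u ∉ G.VSet R₂ := by
    rintro ⟨t, ht, hut⟩
    rcases hD.eq_or_eq_of_inc heD hfD hef hue huf (hR₂D ht) hut with rfl | rfl
    exacts [disjoint_left.1 hd heR₁ ht, disjoint_left.1 hd hfR₁ ht]
  have hglue : ∀ {R}, R ⊆ D → G.IsPath R → G.Ends R = {a, b} → G.IsCycle (Q ∪ R) :=
    fun hRD hR hRE => hQpath.isCycle_union hR hQE hRE
      (disjoint_of_subset_right hRD (disjoint_sdiff_left.mono_left hQ))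
      (hQD ▸ inter_subset_inter_right _ (VSet_mono hRD))
  refine ⟨Q, R₁, R₂, hQ, hR, hd, heR₁, hfR₁, hglue hR₁D hR₁ hR₁E, hglue hR₂D hR₂ hR₂E, ?_⟩
  rw [VSet_union]
  rintro (h | h)
  exacts [huQ h, huR₂ h]

end Ears

end MultiGraph

namespace BiasedGraph

open MultiGraph

variable {V : Type u} {E : Type v} {Ω : BiasedGraph V E} {C D C₁ C₂ C₃ : Set E} {e f : E}
  {u : V}

def IsBalancing (Ω : BiasedGraph V E) (u : V) : Prop :=
  ∀ C, Ω.IsCycle C → u ∉ Ω.VSet C → C ∈ Ω.Balanced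

lemma ThetaProperty.mem_balanced_iff (hθ : Ω.ThetaProperty) (h₁ : Ω.IsCycle C₁)
    (h₂ : Ω.IsCycle C₂) (h₃ : Ω.IsCycle C₃) (h : C₃ = symmDiff C₁ C₂) (hC₂ : C₂ ∈ Ω.Balanced) :
    C₁ ∈ Ω.Balanced ↔ C₃ ∈ Ω.Balanced :=
  ⟨fun hC₁ => hθ.2 _ _ _ h₁ h₂ h₃ h hC₁ hC₂,
    fun hC₃ => hθ.2 _ _ _ h₃ h₂ h₁ (by rw [h, symmDiff_symmDiff_cancel_right]) hC₃ hC₂⟩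

theorem mem_balanced_iff_of_isBalancing (hθ : Ω.ThetaProperty) (hu : Ω.IsBalancing u)
    (hef : e ≠ f) (hue : Ω.Inc u e) (huf : Ω.Inc u f) (hC : Ω.IsCycle C) (hD : Ω.IsCycle D)
    (heC : e ∈ C) (hfC : f ∈ C) (heD : e ∈ D) (hfD : f ∈ D) :
    C ∈ Ω.Balanced ↔ D ∈ Ω.Balanced := by
  induction hn : (C ∪ D).ncard using Nat.strong_induction_on generalizing D with
  | _ n ih =>
  by_cases hCD : C ⊆ D
  · rw [hC.eq_of_subset hD hCD]
  obtain ⟨Q, R₁, R₂, hQ, hR, hd, heR₁, hfR₁, hQR₁, hQR₂, huQR₂⟩ :=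
    hC.exists_ear_exchange hD heC hfC heD hfD hef hue huf hCD
  have hQD : ∀ x ∈ Q, x ∉ D := fun x hx => (hQ hx).2
  have hsymm : Q ∪ R₁ = symmDiff D (Q ∪ R₂) := by
    ext x
    have hxQ := hQD x
    have hxR : x ∈ R₁ → x ∉ R₂ := fun h => disjoint_left.1 hd h
    rw [← hR] at hxQ ⊢
    simp only [mem_union, mem_symmDiff] at hxQ ⊢
    tauto
  have hDQR₁ := hθ.mem_balanced_iff hD hQR₂ hQR₁ hsymm (hu _ hQR₂ huQR₂)
  -- an edge of `R₂ \ C` is dropped, so `C ∪ (Q ∪ R₁)` is smaller than `C ∪ D`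
  obtain ⟨m, hmR₂, hmC⟩ : ∃ m ∈ R₂, m ∉ C := by
    by_contra! h
    have := hQR₂.eq_of_subset hC (union_subset (fun x hx => (hQ hx).1) h)
    rcases (this ▸ heC : e ∈ Q ∪ R₂) with he | he
    exacts [hQD e he heD, disjoint_left.1 hd heR₁ he]
  have hsub : C ∪ (Q ∪ R₁) ⊆ C ∪ D :=
    union_subset subset_union_left <| union_subset (fun x hx => .inl (hQ hx).1)
      fun x hx => .inr (hR ▸ .inl hx)
  have hlt : (C ∪ (Q ∪ R₁)).ncard < n := by
    rw [← hn]
    refine ncard_lt_ncard ((ssubset_iff_of_subset hsub).2 ⟨m, .inr (hR ▸ .inr hmR₂), ?_⟩)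
      (hC.1.union hD.1)
    rintro (h | h | h)
    exacts [hmC h, hmC (hQ h).1, disjoint_left.1 hd h hmR₂]
  exact (ih _ hlt hQR₁ (.inr heR₁) (.inr hfR₁) rfl).trans hDQR₁.symm

end BiasedGraph

theorem stmt_5_general {V E : Type*} (Ω : BiasedGraph V E) (hθ : Ω.ThetaProperty) (u : V)
    (hbal : ∀ C : Set E, Ω.toMultiGraph.IsCycle C → u ∉ Ω.toMultiGraph.VSet C → C ∈ Ω.Balanced)
    (e f : E) (hue : Ω.toMultiGraph.Inc u e) (huf : Ω.toMultiGraph.Inc u f) (hef : e ≠ f) :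
    (∀ C : Set E, Ω.toMultiGraph.IsCycle C → e ∈ C → f ∈ C → C ∈ Ω.Balanced) ∨
    (∀ C : Set E, Ω.toMultiGraph.IsCycle C → e ∈ C → f ∈ C → C ∉ Ω.Balanced) := by
  by_cases h : ∃ C, Ω.toMultiGraph.IsCycle C ∧ e ∈ C ∧ f ∈ C ∧ C ∈ Ω.Balanced
  · obtain ⟨C, hC, heC, hfC, hCB⟩ := h
    exact .inl fun D hD heD hfD =>
      (BiasedGraph.mem_balanced_iff_of_isBalancing hθ hbal hef hue huf hC hD heC hfC heD hfD).1 hCB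
  · exact .inr fun C hC heC hfC hCB => h ⟨C, hC, heC, hfC, hCB⟩

theorem stmt_5 {V E : Type*} (Ω : BiasedGraph V E) (hθ : Ω.ThetaProperty) (u : V)
    (hbal : ∀ C : Set E, Ω.toMultiGraph.IsCycle C → u ∉ Ω.toMultiGraph.VSet C → C ∈ Ω.Balanced)
    (e f : E) (he : Ω.toMultiGraph.IsLink e) (hf : Ω.toMultiGraph.IsLink f)
    (hue : Ω.toMultiGraph.Inc u e) (huf : Ω.toMultiGraph.Inc u f) (hef : e ≠ f) :
    (∀ C : Set E, Ω.toMultiGraph.IsCycle C → e ∈ C → f ∈ C → C ∈ Ω.Balanced) ∨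
    (∀ C : Set E, Ω.toMultiGraph.IsCycle C → e ∈ C → f ∈ C → C ∉ Ω.Balanced) :=
  stmt_5_general Ω hθ u hbal e f hue huf hef
end

section
/- Let Ω be a biased graph with connected underlying graph whose frame matroid F(Ω) is connected, and let (X, Y) be a 1-separation of F(Ω) such that both Ω[X] and Ω[Y] are connected subgraphs. If Ω is unbalanced, then either λ_Ω(X,Y) = 1 and exactly one of Ω[X], Ω[Y] is balanced, or λ_Ω(X,Y) = 2 and both Ω[X] and Ω[Y] are balanced. -/
open Set

/-! ### Biased graph core -/

universe u v

/-- The number of balanced components of the subgraph induced by `X`. -/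
noncomputable def BiasedGraph.numBal {V E : Type*} (Ω : BiasedGraph V E) (X : Set E) : ℕ :=
  {C : Set E | Ω.toMultiGraph.IsComponentOf C X ∧ Ω.BalancedOn C}.ncard

/-- The rank of an edge set in the frame matroid of `Ω`. -/
noncomputable def BiasedGraph.rk {V E : Type*} (Ω : BiasedGraph V E) (X : Set E) : ℤ :=
  ((Ω.toMultiGraph.VSet X).ncard : ℤ) - Ω.numBal X

/-!
For connected `X`, the number `b(X)` of balanced components is `1` or `0` according as `Ω[X]`
is balanced or not; in particular `b(E) = 0`. Inclusion–exclusion on vertex sets turns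
`r(X) + r(Y) = r(E)` into `λ(X, Y) = b(X) + b(Y)`, and `λ(X, Y) ≥ 1` because the underlying
graph is connected, so `Ω[X]` and `Ω[Y]` are not both unbalanced.
-/

namespace MultiGraph

variable {V E : Type*} (G : MultiGraph V E)

theorem vSet_union (X Y : Set E) : G.VSet (X ∪ Y) = G.VSet X ∪ G.VSet Y := by
  ext v
  simp only [VSet, Set.mem_union, Set.mem_ofPred_eq, or_and_right, exists_or]

theorem IsComponentOf.eq_of_connectedOn {G : MultiGraph V E} {C X : Set E}
    (h : G.IsComponentOf C X) (hX : G.ConnectedOn X) : C = X := by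
  obtain ⟨e, he, rfl⟩ := h
  exact Set.Subset.antisymm (fun _ hf => hf.1) fun _ hf => ⟨hf, hX he hf⟩

theorem isComponentOf_self {X : Set E} (hX : G.ConnectedOn X) (hne : X.Nonempty) :
    G.IsComponentOf X X := by
  obtain ⟨e, he⟩ := hne
  exact ⟨e, he, Set.Subset.antisymm (fun _ hf => ⟨hf, hX he hf⟩) fun _ hf => hf.1⟩

theorem vSet_inter_nonempty_of_connectedOn {X Y : Set E} (hXY : G.ConnectedOn (X ∪ Y))
    (hX : X.Nonempty) (hY : Y.Nonempty) : (G.VSet X ∩ G.VSet Y).Nonempty := by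
  obtain ⟨e, he⟩ := hX
  obtain ⟨f, hf⟩ := hY
  suffices ∀ g, Relation.ReflTransGen (G.EdgeAdj (X ∪ Y)) e g → g ∈ Y →
      (G.VSet X ∩ G.VSet Y).Nonempty from this f (hXY (.inl he) (.inr hf)) hf
  intro g hg
  induction hg with
  | refl => exact fun heY => ⟨G.fst e, ⟨e, he, .inl rfl⟩, ⟨e, heY, .inl rfl⟩⟩
  | @tail b c _ hbc ih =>
    intro hc
    obtain ⟨hb, -, v, hvb, hvc⟩ := hbc
    rcases hb with hbX | hbY
    · exact ⟨v, ⟨b, hbX, hvb⟩, ⟨c, hc, hvc⟩⟩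
    · exact ih hbY

end MultiGraph

namespace BiasedGraph

variable {V E : Type*} (Ω : BiasedGraph V E)

theorem numBal_eq_one {X : Set E} (hX : Ω.ConnectedOn X) (hne : X.Nonempty)
    (hb : Ω.BalancedOn X) : Ω.numBal X = 1 := by
  have : {C | Ω.IsComponentOf C X ∧ Ω.BalancedOn C} = {X} :=
    Set.eq_singleton_iff_unique_mem.2
      ⟨⟨Ω.isComponentOf_self hX hne, hb⟩, fun _ hC => hC.1.eq_of_connectedOn hX⟩
  rw [numBal, this, Set.ncard_singleton]

theorem numBal_eq_zero {X : Set E} (hX : Ω.ConnectedOn X) (hb : ¬ Ω.BalancedOn X) :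
    Ω.numBal X = 0 := by
  have : {C | Ω.IsComponentOf C X ∧ Ω.BalancedOn C} = ∅ :=
    Set.eq_empty_of_forall_notMem fun C hC => hb (hC.1.eq_of_connectedOn hX ▸ hC.2)
  rw [numBal, this, Set.ncard_empty]

theorem ncard_vSet_inter_eq_of_rk_add_rk_eq [Finite V] {X Y : Set E}
    (h : Ω.rk X + Ω.rk Y = Ω.rk (X ∪ Y)) :
    ((Ω.VSet X ∩ Ω.VSet Y).ncard : ℤ) = Ω.numBal X + Ω.numBal Y - Ω.numBal (X ∪ Y) := by
  have := Set.ncard_union_add_ncard_inter (Ω.VSet X) (Ω.VSet Y)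
  rw [rk, rk, rk, MultiGraph.vSet_union] at h
  omega

end BiasedGraph

theorem stmt_9_general {V E : Type*} [Finite V] (Ω : BiasedGraph V E)
    (hconn : Ω.toMultiGraph.ConnectedOn Set.univ)
    (hunb : ∃ C : Set E, Ω.toMultiGraph.IsCycle C ∧ C ∉ Ω.Balanced)
    (X Y : Set E) (hXY : X ∪ Y = Set.univ)
    (hXne : X.Nonempty) (hYne : Y.Nonempty)
    (hsep : Ω.rk X + Ω.rk Y = Ω.rk Set.univ)
    (hXc : Ω.toMultiGraph.ConnectedOn X) (hYc : Ω.toMultiGraph.ConnectedOn Y) :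
    (((Ω.toMultiGraph.VSet X ∩ Ω.toMultiGraph.VSet Y).ncard = 1 ∧ (Ω.BalancedOn X ↔ ¬ Ω.BalancedOn Y)) ∨
     ((Ω.toMultiGraph.VSet X ∩ Ω.toMultiGraph.VSet Y).ncard = 2 ∧ Ω.BalancedOn X ∧ Ω.BalancedOn Y)) := by
  obtain ⟨C, hC, hCb⟩ := hunb
  have hbE : Ω.numBal Set.univ = 0 :=
    Ω.numBal_eq_zero hconn fun h => hCb (h C (Set.subset_univ C) hC)
  have hlam := Ω.ncard_vSet_inter_eq_of_rk_add_rk_eq (hXY ▸ hsep)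
  rw [hXY, hbE] at hlam
  have hpos : 0 < (Ω.VSet X ∩ Ω.VSet Y).ncard :=
    (Set.ncard_pos (Set.toFinite _)).2
      (Ω.vSet_inter_nonempty_of_connectedOn (hXY ▸ hconn) hXne hYne)
  by_cases hbX : Ω.BalancedOn X <;> by_cases hbY : Ω.BalancedOn Y
  · rw [Ω.numBal_eq_one hXc hXne hbX, Ω.numBal_eq_one hYc hYne hbY] at hlam
    exact .inr ⟨by omega, hbX, hbY⟩
  · rw [Ω.numBal_eq_one hXc hXne hbX, Ω.numBal_eq_zero hYc hbY] at hlam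
    exact .inl ⟨by omega, by tauto⟩
  · rw [Ω.numBal_eq_zero hXc hbX, Ω.numBal_eq_one hYc hYne hbY] at hlam
    exact .inl ⟨by omega, by tauto⟩
  · rw [Ω.numBal_eq_zero hXc hbX, Ω.numBal_eq_zero hYc hbY] at hlam
    omega

theorem stmt_9 {V E : Type*} [Finite V] [Finite E] (Ω : BiasedGraph V E)
    (hθ : Ω.ThetaProperty)
    (hconn : Ω.toMultiGraph.ConnectedOn Set.univ)
    (hunb : ∃ C : Set E, Ω.toMultiGraph.IsCycle C ∧ C ∉ Ω.Balanced)
    (X Y : Set E) (hXY : X ∪ Y = Set.univ) (hd : Disjoint X Y)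
    (hXne : X.Nonempty) (hYne : Y.Nonempty)
    (hsep : Ω.rk X + Ω.rk Y = Ω.rk Set.univ)
    (hXc : Ω.toMultiGraph.ConnectedOn X) (hYc : Ω.toMultiGraph.ConnectedOn Y) :
    (((Ω.toMultiGraph.VSet X ∩ Ω.toMultiGraph.VSet Y).ncard = 1 ∧ (Ω.BalancedOn X ↔ ¬ Ω.BalancedOn Y)) ∨
     ((Ω.toMultiGraph.VSet X ∩ Ω.toMultiGraph.VSet Y).ncard = 2 ∧ Ω.BalancedOn X ∧ Ω.BalancedOn Y)) :=
  stmt_9_general Ω hconn hunb X Y hXY hXne hYne hsep hXc hYc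
end
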